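/- arXiv:2605.00811 — 3 statements merged into one kernel-verified Lean document; each statement's English description precedes it below -/
import Mathlib

section
/- Let K be a field, q ∈ K nonzero with q^N ≠ 1 for all N ≥ 1. Define the partial order x ⊴ y iff y/x = q^{-n} for some n ≥ 0, and for x ⊴ y define I_q(x;[u_1,v_1],…,[u_k,v_k];y) = Σ over chains x ⊴ t_1 ⊴ ⋯ ⊴ t_k ⊴ y of ∏_j (t_j/(t_j−u_j) − t_j/(t_j−v_j)), assuming no t in the interval [x,y] equals any u_j or v_j. Then I_q(x;[u_1,v_1],…,[u_k,v_k];y) = I_q(x;[xy/v_k, xy/u_k],…,[xy/v_1, xy/u_1];y), provided all parameters xy/u_j, xy/v_j also avoid the interval. -/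
/-!
The substitution `t ↦ xy/t` with `y = x q^{-N}` sends the lattice point `x q^{-m}` to
`x q^{-(N-m)}`, so it maps the chains `x ⊴ t_1 ⊴ ⋯ ⊴ t_k ⊴ y` bijectively onto themselves,
reversing their order. Under it the factor `t/(t-u) - t/(t-v)` becomes the factor of the
inverted interval `[xy/v, xy/u]` evaluated at `xy/t`, which gives the identity term by term.
-/

/-- The iterated `q`-integral `I_q(x; [u_1,v_1], …, [u_k,v_k]; y)` where `y = x * q^{-N}`:
the sum over all chains `x ⊴ t_1 ⊴ ⋯ ⊴ t_k ⊴ y` (i.e. `t_j = x * q^{-n_j}` with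
`0 ≤ n_1 ≤ ⋯ ≤ n_k ≤ N`) of `∏_j (t_j/(t_j - u_j) - t_j/(t_j - v_j))`. -/
noncomputable def Iq {K : Type*} [Field K] (q x : K) (N : ℕ) (uv : List (K × K)) : K :=
  ∑ n ∈ Finset.univ.filter (fun n : Fin uv.length → Fin (N + 1) =>
      ∀ i j : Fin uv.length, i ≤ j → n i ≤ n j),
    ∏ j : Fin uv.length,
      (x * q ^ (-((n j : ℕ) : ℤ)) / (x * q ^ (-((n j : ℕ) : ℤ)) - (uv.get j).1)
        - x * q ^ (-((n j : ℕ) : ℤ)) / (x * q ^ (-((n j : ℕ) : ℤ)) - (uv.get j).2))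

open Finset

theorem sum_filter_monotone_rev_comp {M : Type*} [AddCommMonoid M] (k m : ℕ)
    (f : (Fin k → Fin m) → M) :
    ∑ n ∈ univ.filter (fun n : Fin k → Fin m => ∀ i j, i ≤ j → n i ≤ n j),
        f (Fin.rev ∘ n ∘ Fin.rev) =
      ∑ n ∈ univ.filter (fun n : Fin k → Fin m => ∀ i j, i ≤ j → n i ≤ n j), f n := by
  have hmono (n : Fin k → Fin m) (hn : ∀ i j, i ≤ j → n i ≤ n j) (i j : Fin k)
      (hij : i ≤ j) : (Fin.rev ∘ n ∘ Fin.rev) i ≤ (Fin.rev ∘ n ∘ Fin.rev) j :=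
    Fin.rev_le_rev.mpr (hn _ _ (Fin.rev_le_rev.mpr hij))
  have hrev (n : Fin k → Fin m) : Fin.rev ∘ (Fin.rev ∘ n ∘ Fin.rev) ∘ Fin.rev = n :=
    funext fun j => by simp
  refine sum_nbij' (fun n => Fin.rev ∘ n ∘ Fin.rev) (fun n => Fin.rev ∘ n ∘ Fin.rev)
    (fun n hn => ?_) (fun n hn => ?_) (fun n _ => hrev n) (fun n _ => hrev n) (fun n _ => rfl)
  all_goals simp only [mem_filter, mem_univ, true_and] at hn ⊢; exact hmono n hn

section

variable {K : Type*} [Field K]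

theorem div_div_sub_div_div {c t w : K} (hc : c ≠ 0) (ht : t ≠ 0) (hw : w ≠ 0) (htw : t ≠ w) :
    c / t / (c / t - c / w) = w / (w - t) := by
  have hwt : w - t ≠ 0 := sub_ne_zero.mpr htw.symm
  field_simp

def chainWeight (t : K) (p : K × K) : K := t / (t - p.1) - t / (t - p.2)

def invertPair (c : K) (p : K × K) : K × K := (c / p.2, c / p.1)

theorem chainWeight_div_invertPair {c t : K} {p : K × K} (hc : c ≠ 0) (ht : t ≠ 0)
    (hp₁ : p.1 ≠ 0) (hp₂ : p.2 ≠ 0) (ht₁ : t ≠ p.1) (ht₂ : t ≠ p.2) :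
    chainWeight (c / t) (invertPair c p) = chainWeight t p := by
  have h₁ : t - p.1 ≠ 0 := sub_ne_zero.mpr ht₁
  have h₂ : t - p.2 ≠ 0 := sub_ne_zero.mpr ht₂
  rw [chainWeight, chainWeight, invertPair, div_div_sub_div_div hc ht hp₂ ht₂,
    div_div_sub_div_div hc ht hp₁ ht₁]
  field_simp
  ring

theorem mul_zpow_neg_sub {q x : K} (hq : q ≠ 0) (hx : x ≠ 0) {m N : ℕ} (hm : m ≤ N) :
    x * q ^ (-((N - m : ℕ) : ℤ)) = x * (x * q ^ (-(N : ℤ))) / (x * q ^ (-(m : ℤ))) := by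
  rw [eq_div_iff (by positivity), Nat.cast_sub hm, mul_mul_mul_comm, ← zpow_add₀ hq]
  ring_nf

/-- `Iq` with the parameters given as a family over `Fin k`, so that lists whose lengths agree
only propositionally can be compared. -/
noncomputable def chainSum (q x : K) (N k : ℕ) (p : Fin k → K × K) : K :=
  ∑ n ∈ univ.filter (fun n : Fin k → Fin (N + 1) => ∀ i j, i ≤ j → n i ≤ n j),
    ∏ j, chainWeight (x * q ^ (-((n j : ℕ) : ℤ))) (p j)

theorem Iq_eq_chainSum {q x : K} {N k : ℕ} {L : List (K × K)} (h : L.length = k)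
    {p : Fin k → K × K} (hp : ∀ j, L.get (Fin.cast h.symm j) = p j) :
    Iq q x N L = chainSum q x N k p := by
  subst h
  obtain rfl : L.get = p := funext hp
  rfl

theorem chainSum_invertPair_rev {q x : K} (hq : q ≠ 0) (hx : x ≠ 0) {N k : ℕ}
    {p : Fin k → K × K} (hp : ∀ j, (p j).1 ≠ 0 ∧ (p j).2 ≠ 0)
    (havoid : ∀ j, ∀ m ≤ N, x * q ^ (-(m : ℤ)) ≠ (p j).1 ∧ x * q ^ (-(m : ℤ)) ≠ (p j).2) :
    chainSum q x N k (fun j => invertPair (x * (x * q ^ (-(N : ℤ)))) (p (Fin.rev j))) =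
      chainSum q x N k p := by
  rw [chainSum, ← sum_filter_monotone_rev_comp]
  refine sum_congr rfl fun n _ => ?_
  rw [← Fintype.prod_equiv Fin.revPerm _ _ (fun _ => rfl)]
  refine prod_congr rfl fun j _ => ?_
  have hm : (n j : ℕ) ≤ N := Nat.le_of_lt_succ (n j).isLt
  simp only [Function.comp_apply, Fin.revPerm_apply, Fin.rev_rev, Fin.val_rev]
  obtain ⟨ht₁, ht₂⟩ := havoid j _ hm
  rw [Nat.add_sub_add_right, mul_zpow_neg_sub hq hx hm]
  exact chainWeight_div_invertPair (by positivity) (by positivity) (hp j).1 (hp j).2 ht₁ ht₂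

end

theorem iq_inversion_general {K : Type*} [Field K] (q x : K) (N : ℕ) (uv : List (K × K))
    (hq0 : q ≠ 0) (hx : x ≠ 0)
    (hnz : ∀ p ∈ uv, p.1 ≠ 0 ∧ p.2 ≠ 0)
    (havoid : ∀ p ∈ uv, ∀ n : ℕ, n ≤ N →
      x * q ^ (-(n : ℤ)) ≠ p.1 ∧ x * q ^ (-(n : ℤ)) ≠ p.2) :
    Iq q x N uv =
      Iq q x N (uv.reverse.map (fun p =>
        (x * (x * q ^ (-(N : ℤ))) / p.2, x * (x * q ^ (-(N : ℤ))) / p.1))) := by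
  set c := x * (x * q ^ (-(N : ℤ)))
  calc Iq q x N uv = chainSum q x N uv.length uv.get := rfl
    _ = chainSum q x N uv.length (fun j => invertPair c (uv.get (Fin.rev j))) :=
      (chainSum_invertPair_rev hq0 hx (fun j => hnz _ (uv.get_mem j))
        (fun j => havoid _ (uv.get_mem j))).symm
    _ = Iq q x N (uv.reverse.map (invertPair c)) :=
      (Iq_eq_chainSum (by simp) fun j => by simp [Nat.sub_sub, add_comm]).symm

/-- **Inversion identity for iterated `q`-integrals** (Lemma 4.1 of the paper):
`I_q(x;[u_1,v_1],…,[u_k,v_k];y) = I_q(x;[xy/v_k, xy/u_k],…,[xy/v_1, xy/u_1];y)`,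
where `y = x q^{-N}`, provided `q` is not a root of unity, all `u_j, v_j` are nonzero and
avoid the interval `{t : x ⊴ t ⊴ y}`, and the inverted parameters `xy/u_j, xy/v_j` also
avoid the interval. -/
theorem iq_inversion {K : Type*} [Field K] (q x : K) (N : ℕ) (uv : List (K × K))
    (hq0 : q ≠ 0) (hq : ∀ n : ℕ, 1 ≤ n → q ^ n ≠ 1) (hx : x ≠ 0)
    (hnz : ∀ p ∈ uv, p.1 ≠ 0 ∧ p.2 ≠ 0)
    (havoid : ∀ p ∈ uv, ∀ n : ℕ, n ≤ N →
      x * q ^ (-(n : ℤ)) ≠ p.1 ∧ x * q ^ (-(n : ℤ)) ≠ p.2)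
    (havoid' : ∀ p ∈ uv, ∀ n : ℕ, n ≤ N →
      x * q ^ (-(n : ℤ)) ≠ x * (x * q ^ (-(N : ℤ))) / p.1 ∧
      x * q ^ (-(n : ℤ)) ≠ x * (x * q ^ (-(N : ℤ))) / p.2) :
    Iq q x N uv =
      Iq q x N (uv.reverse.map (fun p =>
        (x * (x * q ^ (-(N : ℤ))) / p.2, x * (x * q ^ (-(N : ℤ))) / p.1))) :=
  iq_inversion_general q x N uv hq0 hx hnz havoid
end

section
/- With I_q(a_0; a_1,…,a_k; a_{k+1}) := Σ_{a_0 ⊴ t_1 ⊴ ⋯ ⊴ t_k ⊴ a_{k+1}} ∏_{j=1}^k t_j/(t_j − a_j), one has the 0-insertion difference formula: I_q(a_0; a_1,…,a_h, 0, a_{h+1},…,a_k; a_{k+1}) − I_q(a_0; a_1,…,a_h, 0, a_{h+1}q,…,a_k q; a_{k+1}q) = I_q(a_0; a_1,…,a_h, a_{h+1},…,a_k; a_{k+1}). -/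
/-!
Splitting off the first node, `I_q(x; a, L; x q^{-N}) = Σ_{m ≤ N} t_m/(t_m - a) · I_q(t_m; L; x q^{-N})`
with `t_m = x q^{-m}`. The letter `0` contributes the factor `1`, and multiplying the later letters
by `q` is the same as moving every later node one step along the chain. So for `pre = []` the two
sums match node by node after a shift, leaving only the node `m = 0`, which is the right-hand side.
Prepending a letter to `pre` keeps the identity node by node, except at the last node
`m = N + 1`: there all later nodes coincide, and the letter `0` can simply be dropped.
-/

/-- The iterated `q`-integral `I_q(a_0; a_1, …, a_k; a_{k+1})` with `a_0 = x` and
`a_{k+1} = x * q^{-N}`: the sum over chains `x ⊴ t_1 ⊴ ⋯ ⊴ t_k ⊴ x q^{-N}`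
(i.e. `t_j = x q^{-n_j}`, `0 ≤ n_1 ≤ ⋯ ≤ n_k ≤ N`) of `∏_j t_j/(t_j - a_j)`. -/
noncomputable def IqS {K : Type*} [Field K] (q x : K) (N : ℕ) (a : List K) : K :=
  ∑ n ∈ Finset.univ.filter (fun n : Fin a.length → Fin (N + 1) =>
      ∀ i j : Fin a.length, i ≤ j → n i ≤ n j),
    ∏ j : Fin a.length,
      x * q ^ (-((n j : ℕ) : ℤ)) / (x * q ^ (-((n j : ℕ) : ℤ)) - a.get j)

open Finset

section MonotoneTuples

variable {k N : ℕ}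

def consOffset (m : Fin (N + 1)) (n : Fin k → Fin (N - m + 1)) : Fin (k + 1) → Fin (N + 1) :=
  Fin.cons m fun j => ⟨m + n j, by omega⟩

lemma consOffset_zero (m : Fin (N + 1)) (n : Fin k → Fin (N - m + 1)) :
    consOffset m n 0 = m := rfl

@[simp] lemma val_consOffset_succ (m : Fin (N + 1)) (n : Fin k → Fin (N - m + 1)) (j : Fin k) :
    (consOffset m n j.succ : ℕ) = m + n j := rfl

lemma monotone_consOffset (m : Fin (N + 1)) {n : Fin k → Fin (N - m + 1)} (hn : Monotone n) :
    Monotone (consOffset m n) := by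
  intro i j hij
  cases i using Fin.cases with
  | zero => cases j using Fin.cases <;> simp [Fin.le_def, consOffset_zero]
  | succ i =>
    cases j using Fin.cases with
    | zero => exact absurd hij (by simp)
    | succ j =>
      have := hn (Fin.succ_le_succ_iff.mp hij)
      simp only [Fin.le_def, val_consOffset_succ] at this ⊢
      omega

lemma sum_monotone_fin_succ {R : Type*} [AddCommMonoid R] (F : (Fin (k + 1) → Fin (N + 1)) → R) :
    ∑ n ∈ univ.filter (fun n : Fin (k + 1) → Fin (N + 1) => ∀ i j, i ≤ j → n i ≤ n j), F n =
      ∑ m : Fin (N + 1), ∑ n ∈ univ.filter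
        (fun n : Fin k → Fin (N - m + 1) => ∀ i j, i ≤ j → n i ≤ n j), F (consOffset m n) := by
  rw [← sum_fiberwise_of_maps_to (g := fun n => n 0) (t := univ) fun n _ => mem_univ (n 0)]
  refine sum_congr rfl fun m _ => ?_
  symm
  refine sum_nbij' (consOffset m) (fun n j => ⟨n j.succ - m, by omega⟩) ?_ ?_ ?_ ?_ fun _ _ => rfl
  · intro n hn
    simp only [mem_filter, mem_univ, true_and] at hn ⊢
    exact ⟨monotone_consOffset m fun i j => hn i j, rfl⟩
  · intro n hn
    simp only [mem_filter, mem_univ, true_and] at hn ⊢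
    intro i j hij
    have := hn.1 _ _ (Fin.succ_le_succ_iff.mpr hij)
    simp only [Fin.le_def] at this ⊢
    omega
  · intro n _
    funext j
    ext
    simp
  · intro n hn
    simp only [mem_filter, mem_univ, true_and] at hn
    obtain ⟨hmono, rfl⟩ := hn
    funext i
    cases i using Fin.cases with
    | zero => rfl
    | succ i =>
      ext
      have := hmono _ _ (Fin.zero_le i.succ)
      simp only [Fin.le_def] at this
      simp only [val_consOffset_succ]
      omega

end MonotoneTuples

section IqS

variable {K : Type*} [Field K] {q : K}

lemma zpow_neg_natCast_add (q : K) (a b : ℕ) :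
    q ^ (-((a + b : ℕ) : ℤ)) = q ^ (-(a : ℤ)) * q ^ (-(b : ℤ)) := by
  simp only [zpow_neg, zpow_natCast, pow_add, mul_inv]

lemma IqS_nil (q x : K) (N : ℕ) : IqS q x N [] = 1 := by
  simp [IqS]

lemma IqS_cons (q x : K) (N : ℕ) (a : K) (l : List K) :
    IqS q x N (a :: l) = ∑ m : Fin (N + 1),
      x * q ^ (-((m : ℕ) : ℤ)) / (x * q ^ (-((m : ℕ) : ℤ)) - a) *
        IqS q (x * q ^ (-((m : ℕ) : ℤ))) (N - m) l := by
  refine (sum_monotone_fin_succ (k := l.length) _).trans (sum_congr rfl fun m _ => ?_)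
  rw [IqS, mul_sum]
  refine sum_congr rfl fun n _ => ?_
  refine (Fin.prod_univ_succ (n := l.length) _).trans (congrArg _ (prod_congr rfl fun j _ => ?_))
  rw [val_consOffset_succ, zpow_neg_natCast_add, ← mul_assoc]
  rfl

lemma IqS_zero (q y : K) (l : List K) : IqS q y 0 l = (l.map fun a => y / (y - a)).prod := by
  induction l with
  | nil => rw [IqS_nil, List.map_nil, List.prod_nil]
  | cons a l ih =>
    rw [IqS_cons, Fin.sum_univ_one]
    simp [ih]

lemma div_sub_mul_eq_mul_inv_div (hq : q ≠ 0) (t b : K) :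
    t / (t - b * q) = t * q⁻¹ / (t * q⁻¹ - b) := by
  rw [← mul_div_mul_right _ _ (inv_ne_zero hq), sub_mul, mul_inv_cancel_right₀ hq]

lemma IqS_map_mul_right (hq : q ≠ 0) (l : List K) (y : K) (N : ℕ) :
    IqS q y N (l.map (· * q)) = IqS q (y * q⁻¹) N l := by
  induction l generalizing y N with
  | nil => rfl
  | cons a l ih =>
    rw [List.map_cons, IqS_cons, IqS_cons]
    refine sum_congr rfl fun m _ => ?_
    rw [div_sub_mul_eq_mul_inv_div hq, ih, mul_right_comm y]

lemma IqS_zero_append_zero_cons {y : K} (hy : y ≠ 0) (pre post : List K) :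
    IqS q y 0 (pre ++ 0 :: post) = IqS q y 0 (pre ++ post) := by
  simp [IqS_zero, hy]

lemma IqS_zero_cons_sub (hq : q ≠ 0) {x : K} (hx : x ≠ 0) (l : List K) (N : ℕ) :
    IqS q x (N + 1) (0 :: l) - IqS q x N (0 :: l.map (· * q)) = IqS q x (N + 1) l := by
  have hw (m : ℕ) : x * q ^ (-(m : ℤ)) / (x * q ^ (-(m : ℤ))) = 1 :=
    div_self (mul_ne_zero hx (zpow_ne_zero _ hq))
  have hshift (i : Fin (N + 1)) : IqS q (x * q ^ (-((i.succ : ℕ) : ℤ))) (N + 1 - i.succ) l =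
      IqS q (x * q ^ (-((i : ℕ) : ℤ)) * q⁻¹) (N - i) l := by
    rw [Fin.val_succ, zpow_neg_natCast_add, Nat.cast_one, zpow_neg_one, mul_assoc,
      Nat.add_sub_add_right]
  rw [IqS_cons, IqS_cons, Fin.sum_univ_succ]
  simp only [sub_zero, hw, one_mul, IqS_map_mul_right hq, hshift]
  simp only [Fin.val_zero, Nat.cast_zero, neg_zero, zpow_zero, mul_one, Nat.sub_zero,
    add_sub_cancel_right]

lemma IqS_cons_sub_IqS_cons (hq : q ≠ 0) {x : K} (hx : x ≠ 0) (a : K) {L₁ L₂ L₃ : List K}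
    (hsucc : ∀ y ≠ 0, ∀ M : ℕ, IqS q y (M + 1) L₁ - IqS q y M L₂ = IqS q y (M + 1) L₃)
    (hzero : ∀ y ≠ 0, IqS q y 0 L₁ = IqS q y 0 L₃) (N : ℕ) :
    IqS q x (N + 1) (a :: L₁) - IqS q x N (a :: L₂) = IqS q x (N + 1) (a :: L₃) := by
  have hnode (m : ℕ) : x * q ^ (-(m : ℤ)) ≠ 0 := mul_ne_zero hx (zpow_ne_zero _ hq)
  have hsucc' (m M : ℕ) := (hsucc _ (hnode m) M).symm
  have hsub (i : Fin (N + 1)) : N + 1 - (i : ℕ) = N - i + 1 := by omega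
  rw [IqS_cons, IqS_cons, IqS_cons, Fin.sum_univ_castSucc (n := N + 1),
    Fin.sum_univ_castSucc (n := N + 1)]
  simp only [Fin.val_castSucc, Fin.val_last, Nat.sub_self, hzero _ (hnode _), hsub, hsucc', mul_sub,
    sum_sub_distrib]
  abel

end IqS

theorem iq_zero_insertion_difference_general {K : Type*} [Field K] (q x : K) (N : ℕ)
    (pre post : List K)
    (hq0 : q ≠ 0) (hx : x ≠ 0) :
    IqS q x (N + 1) (pre ++ 0 :: post) - IqS q x N (pre ++ 0 :: post.map (· * q))
      = IqS q x (N + 1) (pre ++ post) := by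
  induction pre generalizing x N with
  | nil => exact IqS_zero_cons_sub hq0 hx post N
  | cons a pre ih =>
    exact IqS_cons_sub_IqS_cons hq0 hx a (fun y hy M => ih y M hy)
      (fun y hy => IqS_zero_append_zero_cons hy pre post) N

/-- **The 0-insertion `q`-difference formula** (Corollary 2.5 of the paper):
with letters `pre ++ [0] ++ post`, endpoints `a_0 = x`, `a_{k+1} = x q^{-(N+1)}`,
`I_q(a_0; a_1,…,a_h, 0, a_{h+1},…,a_k; a_{k+1})
 − I_q(a_0; a_1,…,a_h, 0, a_{h+1}q,…,a_kq; a_{k+1}q)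
 = I_q(a_0; a_1,…,a_h, a_{h+1},…,a_k; a_{k+1})`. -/
theorem iq_zero_insertion_difference {K : Type*} [Field K] (q x : K) (N : ℕ)
    (pre post : List K)
    (hq0 : q ≠ 0) (hq : ∀ n : ℕ, 1 ≤ n → q ^ n ≠ 1) (hx : x ≠ 0)
    (havoid : ∀ a ∈ pre ++ post, ∀ n : ℕ, n ≤ N + 1 →
      x * q ^ (-(n : ℤ)) ≠ a) :
    IqS q x (N + 1) (pre ++ 0 :: post) - IqS q x N (pre ++ 0 :: post.map (· * q))
      = IqS q x (N + 1) (pre ++ post) :=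
  iq_zero_insertion_difference_general q x N pre post hq0 hx
end

section
/- Let A < D be real numbers and B, C real numbers not in [A,D], with A,B,C,D distinct. For admissible words w = e_{u_1v_1}⋯e_{u_kv_k} in the six letters e_{AB},e_{AC},e_{AD},e_{BC},e_{BD},e_{CD} (admissible meaning w does not begin with e_{Av} and does not end with e_{uD}), define L(w) = ∫_{A<t_1<⋯<t_k<D} ∏_{j=1}^k (1/(t_j−u_j) − 1/(t_j−v_j)) dt_j. Let τ be the anti-automorphism on words determined by τ(e_{uv}) = e_{σ(v)σ(u)} where σ swaps A↔D and B↔C. Then L(w) = L(τ(w)) for all admissible words w. -/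
open MeasureTheory

/-- The six formal letters `e_{AB}, e_{AC}, e_{AD}, e_{BC}, e_{BD}, e_{CD}`. -/
inductive Letter : Type
  | AB | AC | AD | BC | BD | CD
  deriving DecidableEq

/-- First coordinate of a letter, as a parameter value. -/
def Letter.fst {α : Type*} (A B C _D : α) : Letter → α
  | .AB => A | .AC => A | .AD => A | .BC => B | .BD => B | .CD => C

/-- Second coordinate of a letter, as a parameter value. -/
def Letter.snd {α : Type*} (_A B C D : α) : Letter → α
  | .AB => B | .AC => C | .AD => D | .BC => C | .BD => D | .CD => D

/-- The letter `e_{σ(v)σ(u)}` obtained from `e_{uv}` by the involution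
`σ = (A D)(B C)`. -/
def Letter.dual : Letter → Letter
  | .AB => .CD | .AC => .BD | .AD => .AD | .BC => .BC | .BD => .AC | .CD => .AB

/-- The anti-automorphism `τ` on words: reverse the word and dualize each letter. -/
def tauWord (w : List Letter) : List Letter := (w.map Letter.dual).reverse

/-- A word is admissible if it does not begin with a letter `e_{Av}` and does not
end with a letter `e_{uD}`. -/
def AdmissibleWord (w : List Letter) : Prop :=
  (∀ u ∈ w.head?, u ∉ [Letter.AB, Letter.AC, Letter.AD]) ∧
  (∀ u ∈ w.getLast?, u ∉ [Letter.AD, Letter.BD, Letter.CD])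

/-- The classical iterated integral
`L(w) = ∫_{A<t_1<⋯<t_k<D} ∏_j (1/(t_j−u_j) − 1/(t_j−v_j)) dt_j`. -/
noncomputable def Lclassical (A B C D : ℝ) (w : List Letter) : ℝ :=
  ∫ t in {t : Fin w.length → ℝ | StrictMono t ∧ ∀ j, t j ∈ Set.Ioo A D},
    ∏ j : Fin w.length,
      (1 / (t j - (w.get j).fst A B C D) - 1 / (t j - (w.get j).snd A B C D))

/-! The Möbius involution `φ` exchanging `A ↔ D` and `B ↔ C` has its pole outside `[A, D]` and
is strictly decreasing there, so `t ↦ φ ∘ t` maps the increasing simplex in `(A, D)` onto the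
decreasing one, and reversing the coordinates brings it back. Möbius maps preserve cross ratios,
so pulling back `(1/(x - u) - 1/(x - v)) dx` along `φ` gives `(1/(t - φ u) - 1/(t - φ v)) dt`;
with the orientation reversal `|φ'| = -φ'` this turns the letter `e_{uv}` into `e_{σ(v)σ(u)}`.
Hence the change of variables `t ↦ φ ∘ t ∘ rev` carries the integrand of `L(τ w)` to that of
`L(w)`. -/

open Set

def orderedSimplex (a b : ℝ) (k : ℕ) : Set (Fin k → ℝ) :=
  {t | StrictMono t ∧ ∀ j, t j ∈ Ioo a b}

theorem measurableSet_orderedSimplex (a b : ℝ) (k : ℕ) :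
    MeasurableSet (orderedSimplex a b k) := by
  have hmono : MeasurableSet {t : Fin k → ℝ | StrictMono t} := by
    simp only [StrictMono, ofPred_forall]
    exact .iInter fun i => .iInter fun j => .iInter fun _ =>
      measurableSet_lt (measurable_pi_apply i) (measurable_pi_apply j)
  have hbox : MeasurableSet {t : Fin k → ℝ | ∀ j, t j ∈ Ioo a b} := by
    convert MeasurableSet.univ_pi fun _ : Fin k => measurableSet_Ioo (a := a) (b := b) using 1
    ext; simp
  exact hmono.inter hbox

theorem setIntegral_strictAnti_comp_rev {k : ℕ} (a b : ℝ) (G : (Fin k → ℝ) → ℝ) :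
    ∫ t in {t : Fin k → ℝ | StrictAnti t ∧ ∀ j, t j ∈ Ioo a b}, G (t ∘ Fin.rev) =
      ∫ t in orderedSimplex a b k, G t := by
  let e := MeasurableEquiv.piCongrLeft (fun _ : Fin k => ℝ) (Fin.revPerm (n := k))
  have he : ∀ t : Fin k → ℝ, e t = t ∘ Fin.rev := fun t => funext fun j => by
    simpa using MeasurableEquiv.piCongrLeft_apply_apply (β := fun _ => ℝ) Fin.revPerm t j.rev
  have hpre : e ⁻¹' orderedSimplex a b k = {t | StrictAnti t ∧ ∀ j, t j ∈ Ioo a b} := by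
    ext t
    simp only [mem_preimage, he, orderedSimplex, mem_ofPred_eq]
    refine and_congr ⟨fun h => ?_, fun h => h.comp Fin.rev_strictAnti⟩
      ⟨fun h j => by simpa using h j.rev, fun h j => h j.rev⟩
    simpa [Function.comp_assoc, Fin.rev_involutive.comp_self] using
      h.comp_strictAnti Fin.rev_strictAnti
  rw [← hpre]
  simp only [← he]
  exact (volume_measurePreserving_piCongrLeft _ _).setIntegral_preimage_emb
    e.measurableEmbedding G _

theorem ContinuousLinearMap.det_pi_smul_proj {k : ℕ} (d : Fin k → ℝ) :
    (ContinuousLinearMap.pi fun j => d j • ContinuousLinearMap.proj (R := ℝ)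
      (φ := fun _ : Fin k => ℝ) j).det = ∏ j, d j := by
  have h := LinearMap.det_pi (R := ℝ) (M := ℝ) fun j : Fin k => d j • LinearMap.id
  simp only [LinearMap.det_smul, LinearMap.det_id, Module.finrank_self, pow_one, mul_one] at h
  rw [ContinuousLinearMap.det, ← h]
  congr 1

theorem setIntegral_image_comp_left {k : ℕ} {g g' : ℝ → ℝ} {U : Set ℝ}
    {S : Set (Fin k → ℝ)} (hS : MeasurableSet S) (hSU : ∀ t ∈ S, ∀ j, t j ∈ U)
    (hg : ∀ x ∈ U, HasDerivAt g (g' x) x) (hinj : InjOn g U) (G : (Fin k → ℝ) → ℝ) :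
    ∫ s in (g ∘ ·) '' S, G s = ∫ t in S, (∏ j, |g' (t j)|) * G (g ∘ t) := by
  have hderiv : ∀ t ∈ S, HasFDerivWithinAt (g ∘ ·) (ContinuousLinearMap.pi fun j =>
      g' (t j) • ContinuousLinearMap.proj (R := ℝ) (φ := fun _ : Fin k => ℝ) j) S t := by
    intro t ht
    refine (hasFDerivAt_pi.2 fun j => ?_).hasFDerivWithinAt
    exact (hg _ (hSU t ht j)).comp_hasFDerivAt t (hasFDerivAt_apply j t)
  have hinjS : InjOn (g ∘ ·) S := fun t ht s hs hts =>
    funext fun j => hinj (hSU t ht j) (hSU s hs j) (congrFun hts j)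
  rw [integral_image_eq_integral_abs_det_fderiv_smul volume hS hderiv hinjS]
  simp only [ContinuousLinearMap.det_pi_smul_proj, smul_eq_mul, Finset.abs_prod]

theorem image_comp_orderedSimplex {a b : ℝ} {g : ℝ → ℝ} {k : ℕ}
    (hmaps : MapsTo g (Ioo a b) (Ioo a b)) (hinv : ∀ x ∈ Ioo a b, g (g x) = x)
    (hanti : StrictAntiOn g (Ioo a b)) :
    (g ∘ ·) '' orderedSimplex a b k =
      {t : Fin k → ℝ | StrictAnti t ∧ ∀ j, t j ∈ Ioo a b} := by
  refine Subset.antisymm ?_ fun s hs => ⟨g ∘ s, ⟨?_, fun j => hmaps (hs.2 j)⟩, ?_⟩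
  · rintro _ ⟨t, ⟨hmono, hmem⟩, rfl⟩
    exact ⟨fun i j hij => hanti (hmem i) (hmem j) (hmono hij), fun j => hmaps (hmem j)⟩
  · exact fun i j hij => hanti (hs.2 j) (hs.2 i) (hs.1 hij)
  · exact funext fun j => hinv _ (hs.2 j)

theorem setIntegral_orderedSimplex_prod_involution {a b : ℝ} {g g' : ℝ → ℝ} {k : ℕ}
    (hmaps : MapsTo g (Ioo a b) (Ioo a b)) (hinv : ∀ x ∈ Ioo a b, g (g x) = x)
    (hanti : StrictAntiOn g (Ioo a b)) (hg : ∀ x ∈ Ioo a b, HasDerivAt g (g' x) x)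
    (F : Fin k → ℝ → ℝ) :
    ∫ t in orderedSimplex a b k, ∏ j, |g' (t j)| * F j.rev (g (t j)) =
      ∫ t in orderedSimplex a b k, ∏ j, F j (t j) := by
  calc ∫ t in orderedSimplex a b k, ∏ j, |g' (t j)| * F j.rev (g (t j))
      = ∫ s in (g ∘ ·) '' orderedSimplex a b k, ∏ j, F j.rev (s j) := by
        rw [setIntegral_image_comp_left (measurableSet_orderedSimplex a b k) (fun t ht => ht.2) hg
          hanti.injOn]
        simp only [Finset.prod_mul_distrib, Function.comp_apply]
    _ = ∫ s in {t : Fin k → ℝ | StrictAnti t ∧ ∀ j, t j ∈ Ioo a b},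
          ∏ j, F j ((s ∘ Fin.rev) j) := by
        rw [image_comp_orderedSimplex hmaps hinv hanti]
        congr 1 with s
        simpa using (Equiv.prod_comp Fin.revPerm fun j => F j.rev (s j)).symm
    _ = ∫ t in orderedSimplex a b k, ∏ j, F j (t j) :=
        setIntegral_strictAnti_comp_rev a b fun t => ∏ j, F j (t j)

/-- The Möbius map of the trace-free matrix `!![P, Q; R, -P]`, hence an involution. -/
noncomputable def mobiusInvolution (P Q R t : ℝ) : ℝ := (P * t + Q) / (R * t - P)

section mobiusInvolution

variable {P Q R : ℝ}

theorem mobiusInvolution_sub_mobiusInvolution {t u : ℝ} (ht : R * t - P ≠ 0)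
    (hu : R * u - P ≠ 0) :
    mobiusInvolution P Q R t - mobiusInvolution P Q R u =
      (P ^ 2 + Q * R) * (u - t) / ((R * t - P) * (R * u - P)) := by
  rw [mobiusInvolution, mobiusInvolution, div_sub_div _ _ ht hu]
  ring

theorem mobiusInvolution_mobiusInvolution (hdet : P ^ 2 + Q * R ≠ 0) {t : ℝ}
    (ht : R * t - P ≠ 0) : mobiusInvolution P Q R (mobiusInvolution P Q R t) = t := by
  have hden : R * mobiusInvolution P Q R t - P = (P ^ 2 + Q * R) / (R * t - P) := by
    rw [mobiusInvolution, eq_div_iff ht, sub_mul, mul_assoc, div_mul_cancel₀ _ ht]; ring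
  have hnum : P * mobiusInvolution P Q R t + Q = (P ^ 2 + Q * R) * t / (R * t - P) := by
    rw [mobiusInvolution, eq_div_iff ht, add_mul, mul_assoc, div_mul_cancel₀ _ ht]; ring
  rw [mobiusInvolution, hnum, hden]
  field_simp

theorem hasDerivAt_mobiusInvolution {t : ℝ} (ht : R * t - P ≠ 0) :
    HasDerivAt (mobiusInvolution P Q R) (-(P ^ 2 + Q * R) / (R * t - P) ^ 2) t := by
  have hnum : HasDerivAt (fun t => P * t + Q) P t := by
    simpa using ((hasDerivAt_id t).const_mul P).add_const Q
  have hden : HasDerivAt (fun t => R * t - P) R t := by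
    simpa using ((hasDerivAt_id t).const_mul R).sub_const P
  refine (hnum.div hden ht).congr_deriv ?_
  ring

/-- Pulling back `d log ((x - m u) / (x - m v))` along a Möbius map `m` gives
`d log ((t - u) / (t - v))`, since `(m t - m u) / (m t - m v)` is a constant multiple of
`(t - u) / (t - v)`. -/
theorem mobiusInvolution_pullback_form (hdet : P ^ 2 + Q * R ≠ 0) {t u v : ℝ}
    (ht : R * t - P ≠ 0) (hu : R * u - P ≠ 0) (hv : R * v - P ≠ 0)
    (htu : t ≠ u) (htv : t ≠ v) :
    -(P ^ 2 + Q * R) / (R * t - P) ^ 2 *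
        (1 / (mobiusInvolution P Q R t - mobiusInvolution P Q R u) -
          1 / (mobiusInvolution P Q R t - mobiusInvolution P Q R v)) =
      1 / (t - u) - 1 / (t - v) := by
  rw [mobiusInvolution_sub_mobiusInvolution ht hu, mobiusInvolution_sub_mobiusInvolution ht hv]
  have hut : u - t ≠ 0 := sub_ne_zero.2 htu.symm
  have hvt : v - t ≠ 0 := sub_ne_zero.2 htv.symm
  have htu' : t - u ≠ 0 := sub_ne_zero.2 htu
  have htv' : t - v ≠ 0 := sub_ne_zero.2 htv
  field_simp
  ring

end mobiusInvolution

theorem mul_sub_pos_of_notMem_Icc {a b x : ℝ} (hab : a ≤ b) (hx : x ∉ Icc a b) :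
    0 < (a - x) * (b - x) := by
  simp only [mem_Icc, not_and_or, not_le] at hx
  rcases hx with hx | hx <;> nlinarith

/-- The Möbius involution exchanging `A ↔ D` and `B ↔ C`. -/
noncomputable def dualityMobius (A B C D : ℝ) : ℝ → ℝ :=
  mobiusInvolution (A * D - B * C) (B * C * (A + D) - A * D * (B + C)) (A + D - B - C)

section dualityMobius

variable {A B C D : ℝ}

theorem dualityMobius_denom (t : ℝ) :
    (A + D - B - C) * t - (A * D - B * C) = (t - B) * (t - C) - (t - A) * (t - D) := by
  ring

theorem dualityMobius_det_pos (hAD : A < D) (hB : B ∉ Icc A D) (hC : C ∉ Icc A D) :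
    0 < (A * D - B * C) ^ 2 + (B * C * (A + D) - A * D * (B + C)) * (A + D - B - C) := by
  have h := mul_pos (mul_sub_pos_of_notMem_Icc hAD.le hB) (mul_sub_pos_of_notMem_Icc hAD.le hC)
  rwa [show (A * D - B * C) ^ 2 + (B * C * (A + D) - A * D * (B + C)) * (A + D - B - C) =
    (A - B) * (D - B) * ((A - C) * (D - C)) by ring]

/-- If the affine denominator `R t - P` vanished at `t`, the determinant, which equals
`(R A - P) (R D - P)`, would be `R ^ 2 (A - t) (D - t) ≤ 0`. -/
theorem dualityMobius_denom_ne_zero (hAD : A < D) (hB : B ∉ Icc A D) (hC : C ∉ Icc A D)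
    {t : ℝ} (ht : t ∈ Icc A D) : (A + D - B - C) * t - (A * D - B * C) ≠ 0 := by
  intro h0
  have hdet := dualityMobius_det_pos hAD hB hC
  rw [show (A * D - B * C) ^ 2 + (B * C * (A + D) - A * D * (B + C)) * (A + D - B - C) =
      (A + D - B - C) ^ 2 * ((A - t) * (D - t)) by
    linear_combination ((A + D - B - C) * (A + D - t) - (A * D - B * C)) * h0] at hdet
  nlinarith [mul_nonpos_iff.2 (Or.inr ⟨sub_nonpos.2 ht.1, sub_nonneg.2 ht.2⟩),
    sq_nonneg (A + D - B - C)]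

theorem dualityMobius_denom_B_ne_zero (hAD : A < D) (hB : B ∉ Icc A D) :
    (A + D - B - C) * B - (A * D - B * C) ≠ 0 := by
  have := mul_sub_pos_of_notMem_Icc hAD.le hB
  rw [dualityMobius_denom]
  nlinarith

theorem dualityMobius_denom_C_ne_zero (hAD : A < D) (hC : C ∉ Icc A D) :
    (A + D - B - C) * C - (A * D - B * C) ≠ 0 := by
  have := mul_sub_pos_of_notMem_Icc hAD.le hC
  rw [dualityMobius_denom]
  nlinarith

theorem dualityMobius_apply_eq {x y : ℝ} (hx : (A + D - B - C) * x - (A * D - B * C) ≠ 0)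
    (h : (A * D - B * C) * x + (B * C * (A + D) - A * D * (B + C)) =
      y * ((A + D - B - C) * x - (A * D - B * C))) :
    dualityMobius A B C D x = y :=
  (div_eq_iff hx).2 h

theorem dualityMobius_A (hAD : A < D) (hB : B ∉ Icc A D) (hC : C ∉ Icc A D) :
    dualityMobius A B C D A = D :=
  dualityMobius_apply_eq (dualityMobius_denom_ne_zero hAD hB hC (left_mem_Icc.2 hAD.le)) (by ring)

theorem dualityMobius_D (hAD : A < D) (hB : B ∉ Icc A D) (hC : C ∉ Icc A D) :
    dualityMobius A B C D D = A :=
  dualityMobius_apply_eq (dualityMobius_denom_ne_zero hAD hB hC (right_mem_Icc.2 hAD.le)) (by ring)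

theorem dualityMobius_B (hAD : A < D) (hB : B ∉ Icc A D) : dualityMobius A B C D B = C :=
  dualityMobius_apply_eq (dualityMobius_denom_B_ne_zero hAD hB) (by ring)

theorem dualityMobius_C (hAD : A < D) (hC : C ∉ Icc A D) : dualityMobius A B C D C = B :=
  dualityMobius_apply_eq (dualityMobius_denom_C_ne_zero hAD hC) (by ring)

theorem hasDerivAt_dualityMobius (hAD : A < D) (hB : B ∉ Icc A D) (hC : C ∉ Icc A D)
    {t : ℝ} (ht : t ∈ Icc A D) :
    HasDerivAt (dualityMobius A B C D)
      (-((A * D - B * C) ^ 2 + (B * C * (A + D) - A * D * (B + C)) * (A + D - B - C)) /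
        ((A + D - B - C) * t - (A * D - B * C)) ^ 2) t :=
  hasDerivAt_mobiusInvolution (dualityMobius_denom_ne_zero hAD hB hC ht)

theorem deriv_dualityMobius_neg (hAD : A < D) (hB : B ∉ Icc A D) (hC : C ∉ Icc A D)
    {t : ℝ} (ht : t ∈ Icc A D) : deriv (dualityMobius A B C D) t < 0 := by
  rw [(hasDerivAt_dualityMobius hAD hB hC ht).deriv]
  exact div_neg_of_neg_of_pos (neg_neg_of_pos (dualityMobius_det_pos hAD hB hC))
    (sq_pos_of_ne_zero (dualityMobius_denom_ne_zero hAD hB hC ht))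

theorem strictAntiOn_dualityMobius (hAD : A < D) (hB : B ∉ Icc A D) (hC : C ∉ Icc A D) :
    StrictAntiOn (dualityMobius A B C D) (Icc A D) :=
  strictAntiOn_of_deriv_neg (convex_Icc A D)
    (fun _ ht => (hasDerivAt_dualityMobius hAD hB hC ht).continuousAt.continuousWithinAt)
    (fun _ ht => deriv_dualityMobius_neg hAD hB hC (interior_subset ht))

theorem mapsTo_dualityMobius (hAD : A < D) (hB : B ∉ Icc A D) (hC : C ∉ Icc A D) :
    MapsTo (dualityMobius A B C D) (Ioo A D) (Ioo A D) := by
  intro t ht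
  have hanti := strictAntiOn_dualityMobius hAD hB hC
  have htI := Ioo_subset_Icc_self ht
  constructor
  · simpa only [dualityMobius_D hAD hB hC] using
      hanti htI (right_mem_Icc.2 hAD.le) ht.2
  · simpa only [dualityMobius_A hAD hB hC] using
      hanti (left_mem_Icc.2 hAD.le) htI ht.1

theorem dualityMobius_dualityMobius (hAD : A < D) (hB : B ∉ Icc A D) (hC : C ∉ Icc A D)
    {t : ℝ} (ht : t ∈ Icc A D) : dualityMobius A B C D (dualityMobius A B C D t) = t :=
  mobiusInvolution_mobiusInvolution (dualityMobius_det_pos hAD hB hC).ne'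
    (dualityMobius_denom_ne_zero hAD hB hC ht)

end dualityMobius

namespace Letter

noncomputable def form (A B C D : ℝ) (l : Letter) (t : ℝ) : ℝ :=
  1 / (t - l.fst A B C D) - 1 / (t - l.snd A B C D)

variable {A B C D : ℝ}

theorem fst_notMem_Ioo (hB : B ∉ Icc A D) (hC : C ∉ Icc A D) (l : Letter) :
    l.fst A B C D ∉ Ioo A D := by
  cases l
  all_goals first
    | exact fun h => lt_irrefl A h.1
    | exact fun h => hB (Ioo_subset_Icc_self h)
    | exact fun h => hC (Ioo_subset_Icc_self h)

theorem snd_notMem_Ioo (hB : B ∉ Icc A D) (hC : C ∉ Icc A D) (l : Letter) :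
    l.snd A B C D ∉ Ioo A D := by
  cases l
  all_goals first
    | exact fun h => lt_irrefl D h.2
    | exact fun h => hB (Ioo_subset_Icc_self h)
    | exact fun h => hC (Ioo_subset_Icc_self h)

theorem dualityMobius_denom_fst_ne_zero (hAD : A < D) (hB : B ∉ Icc A D) (hC : C ∉ Icc A D)
    (l : Letter) : (A + D - B - C) * l.fst A B C D - (A * D - B * C) ≠ 0 := by
  cases l
  all_goals first
    | exact dualityMobius_denom_ne_zero hAD hB hC (left_mem_Icc.2 hAD.le)
    | exact dualityMobius_denom_B_ne_zero hAD hB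
    | exact dualityMobius_denom_C_ne_zero hAD hC

theorem dualityMobius_denom_snd_ne_zero (hAD : A < D) (hB : B ∉ Icc A D) (hC : C ∉ Icc A D)
    (l : Letter) : (A + D - B - C) * l.snd A B C D - (A * D - B * C) ≠ 0 := by
  cases l
  all_goals first
    | exact dualityMobius_denom_ne_zero hAD hB hC (right_mem_Icc.2 hAD.le)
    | exact dualityMobius_denom_B_ne_zero hAD hB
    | exact dualityMobius_denom_C_ne_zero hAD hC

theorem dualityMobius_dual_fst (hAD : A < D) (hB : B ∉ Icc A D) (hC : C ∉ Icc A D)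
    (l : Letter) : dualityMobius A B C D (l.dual.fst A B C D) = l.snd A B C D := by
  cases l <;> simp only [dual, fst, snd, dualityMobius_A hAD hB hC, dualityMobius_B hAD hB,
    dualityMobius_C hAD hC]

theorem dualityMobius_dual_snd (hAD : A < D) (hB : B ∉ Icc A D) (hC : C ∉ Icc A D)
    (l : Letter) : dualityMobius A B C D (l.dual.snd A B C D) = l.fst A B C D := by
  cases l <;> simp only [dual, fst, snd, dualityMobius_B hAD hB, dualityMobius_C hAD hC,
    dualityMobius_D hAD hB hC]

theorem abs_deriv_dualityMobius_mul_form (hAD : A < D) (hB : B ∉ Icc A D) (hC : C ∉ Icc A D)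
    (l : Letter) {t : ℝ} (ht : t ∈ Ioo A D) :
    |deriv (dualityMobius A B C D) t| * l.form A B C D (dualityMobius A B C D t) =
      l.dual.form A B C D t := by
  have htI := Ioo_subset_Icc_self ht
  have hne : ∀ {x}, x ∉ Ioo A D → t ≠ x := fun hx h => hx (h ▸ ht)
  rw [abs_of_neg (deriv_dualityMobius_neg hAD hB hC htI),
    (hasDerivAt_dualityMobius hAD hB hC htI).deriv, form, form,
    ← dualityMobius_dual_fst hAD hB hC, ← dualityMobius_dual_snd hAD hB hC,
    ← mobiusInvolution_pullback_form (dualityMobius_det_pos hAD hB hC).ne'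
      (dualityMobius_denom_ne_zero hAD hB hC htI)
      (dualityMobius_denom_fst_ne_zero hAD hB hC l.dual)
      (dualityMobius_denom_snd_ne_zero hAD hB hC l.dual)
      (hne (fst_notMem_Ioo hB hC l.dual)) (hne (snd_notMem_Ioo hB hC l.dual))]
  unfold dualityMobius
  ring

end Letter

theorem setIntegral_orderedSimplex_cast {k k' : ℕ} (h : k = k') (a b : ℝ)
    (F : Fin k' → ℝ → ℝ) :
    ∫ t in orderedSimplex a b k', ∏ j, F j (t j) =
      ∫ t in orderedSimplex a b k, ∏ j, F (Fin.cast h j) (t j) := by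
  subst h
  rfl

theorem length_tauWord (w : List Letter) : (tauWord w).length = w.length := by
  simp [tauWord]

theorem get_tauWord (w : List Letter) (j : Fin w.length) :
    (tauWord w).get (Fin.cast (length_tauWord w).symm j) = (w.get j.rev).dual := by
  simp only [List.get_eq_getElem, Fin.val_cast]
  simp only [tauWord, List.getElem_reverse, List.getElem_map, Fin.val_rev, List.length_map]
  congr 2
  omega

theorem Lclassical_eq_setIntegral (A B C D : ℝ) (w : List Letter) :
    Lclassical A B C D w =
      ∫ t in orderedSimplex A D w.length, ∏ j, (w.get j).form A B C D (t j) :=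
  rfl

theorem Lclassical_tauWord (A B C D : ℝ) (w : List Letter) :
    Lclassical A B C D (tauWord w) =
      ∫ t in orderedSimplex A D w.length, ∏ j, (w.get j.rev).dual.form A B C D (t j) := by
  rw [Lclassical_eq_setIntegral, setIntegral_orderedSimplex_cast (length_tauWord w).symm]
  simp only [get_tauWord]

theorem classical_duality_general (A B C D : ℝ) (hAD : A < D)
    (hB : B ∉ Set.Icc A D) (hC : C ∉ Set.Icc A D)
    (w : List Letter) :
    Lclassical A B C D w = Lclassical A B C D (tauWord w) := by
  have hinv : ∀ x ∈ Ioo A D, dualityMobius A B C D (dualityMobius A B C D x) = x :=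
    fun x hx => dualityMobius_dualityMobius hAD hB hC (Ioo_subset_Icc_self hx)
  have hderiv : ∀ x ∈ Ioo A D,
      HasDerivAt (dualityMobius A B C D) (deriv (dualityMobius A B C D) x) x :=
    fun x hx =>
      (hasDerivAt_dualityMobius hAD hB hC (Ioo_subset_Icc_self hx)).differentiableAt.hasDerivAt
  rw [Lclassical_tauWord, Lclassical_eq_setIntegral,
    ← setIntegral_orderedSimplex_prod_involution (mapsTo_dualityMobius hAD hB hC) hinv
      ((strictAntiOn_dualityMobius hAD hB hC).mono Ioo_subset_Icc_self) hderiv]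
  refine setIntegral_congr_fun (measurableSet_orderedSimplex A D _) fun t ht =>
    Finset.prod_congr rfl fun j _ => ?_
  exact Letter.abs_deriv_dualityMobius_mul_form hAD hB hC _ (ht.2 j)

/-- **The classical duality** (Theorem 1.1 of the paper): if `A < D` are real,
`B, C ∉ [A,D]`, and `A, B, C, D` are pairwise distinct, then `L(w) = L(τ(w))`
for every admissible word `w`. -/
theorem classical_duality (A B C D : ℝ) (hAD : A < D)
    (hB : B ∉ Set.Icc A D) (hC : C ∉ Set.Icc A D)
    (hAB : A ≠ B) (hAC : A ≠ C) (hBC : B ≠ C) (hBD : B ≠ D) (hCD : C ≠ D)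
    (w : List Letter) (hw : AdmissibleWord w) :
    Lclassical A B C D w = Lclassical A B C D (tauWord w) :=
  classical_duality_general A B C D hAD hB hC w
end
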